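/- Let (X,d,μ) be a space of homogeneous type, let p(·), q(·) ∈ 𝒫₁(X) satisfy 1/p(x) − 1/q(x) ≡ η for a constant η ∈ [0,1), and let ω be a weight on X. If there is a constant C such that sup_{t>0} t ‖ω χ_{{x∈X : M_η f(x) > t}}‖_{q(·)} ≤ C‖ω f‖_{p(·)} for every measurable function f, then ‖ω χ_B‖_{q(·)} < ∞ for every ball B ⊆ X. -/

import Mathlib

open MeasureTheory ENNReal Set Filter Topology

noncomputable section

variable {X : Type*}

/-- `d` is a quasi-metric on `X` with quasi-triangle constant `A0`. -/
def IsQuasiMetric (d : X → X → ℝ) (A0 : ℝ) : Prop :=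
  1 ≤ A0 ∧ (∀ x y, 0 ≤ d x y) ∧ (∀ x y, d x y = 0 ↔ x = y) ∧
    (∀ x y, d x y = d y x) ∧ ∀ x y z, d x y ≤ A0 * (d x z + d z y)

/-- The quasi-metric ball `B(c,r)`. -/
def qball (d : X → X → ℝ) (c : X) (r : ℝ) : Set X := {y | d c y < r}

/-- The measure `μ` is doubling (with constant `Cμ`) on quasi-metric balls:
`0 < μ(B(x,2r)) ≤ Cμ·μ(B(x,r)) < ∞`. -/
def IsDoubling [MeasurableSpace X] (d : X → X → ℝ) (μ : Measure X) (Cμ : ℝ≥0∞) : Prop :=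
  1 ≤ Cμ ∧ ∀ (x : X) (r : ℝ), 0 < r →
    0 < μ (qball d x (2 * r)) ∧ μ (qball d x (2 * r)) ≤ Cμ * μ (qball d x r) ∧
      Cμ * μ (qball d x r) < ∞

/-- The Luxemburg norm `‖f‖_{p(·)}` for a variable (possibly infinite) exponent `p`. -/
def luxNorm [MeasurableSpace X] (μ : Measure X) (p : X → ℝ≥0∞) (f : X → ℝ≥0∞) : ℝ≥0∞ :=
  sInf {lam : ℝ≥0∞ | 0 < lam ∧
    (∫⁻ x in {x | p x ≠ ∞}, (f x / lam) ^ (p x).toReal ∂μ) +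
      essSup (fun x => f x / lam) (μ.restrict {x | p x = ∞}) ≤ 1}

/-- The class `𝒫₁(X)`: exponents with values in `[1,∞)` and `p₊ < ∞`. -/
def MemP1 [MeasurableSpace X] (μ : Measure X) (p : X → ℝ≥0∞) : Prop :=
  Measurable p ∧ (∀ x, 1 ≤ p x) ∧ (∀ x, p x ≠ ∞) ∧ essSup p μ < ∞

/-- The class `𝒫(X)`: additionally `1 < p₋`. -/
def MemP [MeasurableSpace X] (μ : Measure X) (p : X → ℝ≥0∞) : Prop :=
  MemP1 μ p ∧ 1 < essInf p μ

/-- Local log-Hölder continuity `LH₀`. -/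
def MemLH0 (d : X → X → ℝ) (p : X → ℝ≥0∞) : Prop :=
  ∃ C0 : ℝ, 0 ≤ C0 ∧ ∀ x y, d x y < 1 / 2 →
    |(p x).toReal - (p y).toReal| ≤ C0 / Real.log (Real.exp 1 + 1 / d x y)

/-- Log-Hölder decay at infinity `LH_∞` with base point `x0` and limit value `pinf`. -/
def MemLHinf (d : X → X → ℝ) (x0 : X) (pinf : ℝ) (p : X → ℝ≥0∞) : Prop :=
  ∃ Cinf : ℝ, 0 ≤ Cinf ∧ ∀ x, |(p x).toReal - pinf| ≤ Cinf / Real.log (Real.exp 1 + d x x0)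

/-- Global log-Hölder continuity `LH = LH₀ ∩ LH_∞`. -/
def MemLH (d : X → X → ℝ) (p : X → ℝ≥0∞) : Prop :=
  MemLH0 d p ∧ ∃ x0 pinf, MemLHinf d x0 pinf p

/-- `w` is a weight: measurable, positive and finite a.e., and locally integrable. -/
def IsWeight [MeasurableSpace X] (d : X → X → ℝ) (μ : Measure X) (w : X → ℝ≥0∞) : Prop :=
  Measurable w ∧ (∀ᵐ x ∂μ, 0 < w x ∧ w x < ∞) ∧
    ∀ (c : X) (r : ℝ), 0 < r → ∫⁻ x in qball d c r, w x ∂μ < ∞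

/-- The pointwise conjugate exponent `p′(·)`, `1/p(x) + 1/p′(x) = 1`. -/
def conjExp (p : X → ℝ≥0∞) : X → ℝ≥0∞ := fun x => if p x = ∞ then 1 else p x / (p x - 1)

/-- The `A_{p(·),q(·)}` characteristic constant
`sup_B μ(B)^{η−1} ‖w χ_B‖_{q(·)} ‖w⁻¹ χ_B‖_{p′(·)}`. -/
def ApqConst [MeasurableSpace X] (d : X → X → ℝ) (μ : Measure X) (η : ℝ)
    (p q : X → ℝ≥0∞) (w : X → ℝ≥0∞) : ℝ≥0∞ :=
  ⨆ (c : X) (r : ℝ) (_ : 0 < r),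
    μ (qball d c r) ^ (η - 1) * luxNorm μ q ((qball d c r).indicator w) *
      luxNorm μ (conjExp p) ((qball d c r).indicator fun x => (w x)⁻¹)

/-- The fractional maximal operator `M_η`. -/
def fracMax [MeasurableSpace X] (d : X → X → ℝ) (μ : Measure X) (η : ℝ)
    (f : X → ℝ≥0∞) (x : X) : ℝ≥0∞ :=
  ⨆ (c : X) (r : ℝ) (_ : 0 < r) (_ : x ∈ qball d c r),
    μ (qball d c r) ^ (η - 1) * ∫⁻ y in qball d c r, f y ∂μ

/-- The Muckenhoupt `A₁` condition: `Mw ≤ C w` a.e. -/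
def MemA1 [MeasurableSpace X] (d : X → X → ℝ) (μ : Measure X) (w : X → ℝ≥0∞) : Prop :=
  ∃ C : ℝ≥0∞, C ≠ ∞ ∧ ∀ᵐ x ∂μ, fracMax d μ 0 w x ≤ C * w x

/-- The Muckenhoupt `A_p` condition for `1 < p < ∞`. -/
def MemAp [MeasurableSpace X] (d : X → X → ℝ) (μ : Measure X) (p : ℝ)
    (w : X → ℝ≥0∞) : Prop :=
  (⨆ (c : X) (r : ℝ) (_ : 0 < r),
    ((μ (qball d c r))⁻¹ * ∫⁻ x in qball d c r, w x ∂μ) *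
      ((μ (qball d c r))⁻¹ * ∫⁻ x in qball d c r, w x ^ (-(1 / (p - 1))) ∂μ) ^ (p - 1)) ≠ ∞

/-- The class `A_∞ = ⋃_{p ≥ 1} A_p`. -/
def MemAinfty [MeasurableSpace X] (d : X → X → ℝ) (μ : Measure X) (w : X → ℝ≥0∞) : Prop :=
  MemA1 d μ w ∨ ∃ p : ℝ, 1 < p ∧ MemAp d μ p w



/-! Test the weak-type inequality on `f = χ_E`, where `E = B ∩ {ω ≤ n}` has positive measure
(such an `n` exists because `ω < ∞` a.e. and `μ(B) > 0`). Then `M_η f ≥ μ(B)^{η-1} μ(E) > 0` on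
`B`, so `B` lies in a superlevel set of `M_η f`, while `ω f ≤ n χ_B` has finite `p(·)`-norm
because `μ(B) < ∞`. -/

section Luxemburg

variable [MeasurableSpace X] (μ : Measure X) (p : X → ℝ≥0∞)

lemma luxNorm_mono {f g : X → ℝ≥0∞} (h : f ≤ g) : luxNorm μ p f ≤ luxNorm μ p g := by
  refine sInf_le_sInf fun lam ⟨hlam, hle⟩ => ⟨hlam, le_trans (add_le_add ?_ ?_) hle⟩
  · exact lintegral_mono fun x =>
      ENNReal.rpow_le_rpow (ENNReal.div_le_div_right (h x) _) ENNReal.toReal_nonneg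
  · exact essSup_mono_ae (.of_forall fun x => ENNReal.div_le_div_right (h x) _)

lemma luxNorm_le_of_lintegral_le (hp : ∀ x, p x ≠ ∞) {f : X → ℝ≥0∞} {lam : ℝ≥0∞}
    (hlam : 0 < lam) (h : ∫⁻ x, (f x / lam) ^ (p x).toReal ∂μ ≤ 1) : luxNorm μ p f ≤ lam := by
  refine sInf_le ⟨hlam, ?_⟩
  have hfin : {x | p x ≠ ∞} = univ := eq_univ_of_forall hp
  have hinf : {x | p x = ∞} = ∅ := eq_empty_of_forall_notMem hp
  rwa [hfin, hinf, Measure.restrict_univ, Measure.restrict_empty, essSup_measure_zero,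
    bot_eq_zero', add_zero]

lemma luxNorm_indicator_const_le (hp1 : ∀ x, 1 ≤ p x) (hp : ∀ x, p x ≠ ∞) (s : Set X)
    (a : ℝ≥0∞) : luxNorm μ p (s.indicator fun _ => a) ≤ (a + 1) * (μ s + 1) := by
  set lam := (a + 1) * (μ s + 1)
  have ha : a / lam ≤ 1 :=
    ENNReal.div_le_of_le_mul ((one_mul lam).symm ▸ le_mul_of_le_of_one_le le_self_add le_add_self)
  have hpow : ∀ x, (s.indicator (fun _ => a) x / lam) ^ (p x).toReal ≤
      s.indicator (fun _ => a / lam) x := by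
    intro x
    have hpx : 1 ≤ (p x).toReal := by simpa using ENNReal.toReal_mono (hp x) (hp1 x)
    by_cases hx : x ∈ s
    · simpa [hx] using ENNReal.rpow_le_rpow_of_exponent_ge ha hpx
    · simp [hx, ENNReal.zero_rpow_of_pos (zero_lt_one.trans_le hpx)]
  refine luxNorm_le_of_lintegral_le μ p hp (by positivity) ?_
  calc ∫⁻ x, (s.indicator (fun _ => a) x / lam) ^ (p x).toReal ∂μ
      ≤ ∫⁻ x, s.indicator (fun _ => a / lam) x ∂μ := lintegral_mono hpow
    _ ≤ a / lam * μ s := lintegral_indicator_const_le s _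
    _ ≤ 1 := by
      rw [← ENNReal.mul_div_right_comm]
      exact ENNReal.div_le_of_le_mul ((one_mul lam).symm ▸ mul_le_mul' le_self_add le_self_add)

end Luxemburg

section Balls

variable [MeasurableSpace X] {d : X → X → ℝ} {μ : Measure X}

lemma IsDoubling.measure_qball_pos {Cμ : ℝ≥0∞} (h : IsDoubling d μ Cμ) (c : X) {r : ℝ}
    (hr : 0 < r) : 0 < μ (qball d c r) := by
  simpa [mul_div_cancel₀ r two_ne_zero] using (h.2 c (r / 2) (half_pos hr)).1

lemma IsDoubling.measure_qball_ne_top {Cμ : ℝ≥0∞} (h : IsDoubling d μ Cμ) (c : X) {r : ℝ}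
    (hr : 0 < r) : μ (qball d c r) ≠ ∞ :=
  ne_top_of_le_ne_top (h.2 c r hr).2.2.ne (le_mul_of_one_le_left' h.1)

lemma le_fracMax (η : ℝ) (f : X → ℝ≥0∞) {c x : X} {r : ℝ} (hr : 0 < r)
    (hx : x ∈ qball d c r) :
    μ (qball d c r) ^ (η - 1) * ∫⁻ y in qball d c r, f y ∂μ ≤ fracMax d μ η f x :=
  le_iSup_of_le c <| le_iSup_of_le r <| le_iSup_of_le hr <| le_iSup_of_le hx le_rfl

lemma qball_subset_fracMax_superlevel {η : ℝ} {f : X → ℝ≥0∞} {c : X} {r : ℝ} (hr : 0 < r)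
    {t : ℝ≥0∞} (ht : t < μ (qball d c r) ^ (η - 1) * ∫⁻ y in qball d c r, f y ∂μ) :
    qball d c r ⊆ {x | t < fracMax d μ η f x} :=
  fun _ hx => ht.trans_le (le_fracMax η f hr hx)

end Balls

lemma exists_nat_measure_inter_le_pos [MeasurableSpace X] {μ : Measure X} {w : X → ℝ≥0∞}
    (hw : ∀ᵐ x ∂μ, w x < ∞) {s : Set X} (hs : 0 < μ s) :
    ∃ n : ℕ, 0 < μ (s ∩ {x | w x ≤ n}) := by
  by_contra! h
  have hcover : s ≤ᵐ[μ] ⋃ n : ℕ, s ∩ {x | w x ≤ n} := by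
    filter_upwards [hw] with x hx hxs
    obtain ⟨n, hn⟩ := ENNReal.exists_nat_gt hx.ne
    exact mem_iUnion.2 ⟨n, hxs, hn.le⟩
  refine hs.ne' (measure_mono_null_ae hcover (measure_iUnion_null fun n => ?_))
  exact nonpos_iff_eq_zero.1 (h n)

theorem statement14_general {X : Type*} [MeasurableSpace X]
    (d : X → X → ℝ) (μ : Measure X) (Cμ : ℝ≥0∞)
    (hball : ∀ (c : X) (r : ℝ), MeasurableSet (qball d c r))
    (hdbl : IsDoubling d μ Cμ)
    (η : ℝ)
    (p q : X → ℝ≥0∞) (hp : MemP1 μ p)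
    (ω : X → ℝ≥0∞) (hω : IsWeight d μ ω)
    (C : ℝ≥0∞) (hC : C ≠ ∞)
    (hbound : ∀ f : X → ℝ≥0∞, Measurable f → ∀ t : ℝ≥0∞, 0 < t →
      t * luxNorm μ q ({x | t < fracMax d μ η f x}.indicator ω) ≤
        C * luxNorm μ p (fun x => ω x * f x)) :
    ∀ (c : X) (r : ℝ), 0 < r → luxNorm μ q ((qball d c r).indicator ω) ≠ ∞ := by
  intro c r hr
  set B := qball d c r
  have hB0 := hdbl.measure_qball_pos c hr
  have hBtop := hdbl.measure_qball_ne_top c hr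
  obtain ⟨n, hE0⟩ := exists_nat_measure_inter_le_pos (hω.2.1.mono fun _ hx => hx.2) hB0
  set E := B ∩ {x | ω x ≤ n}
  have hE : MeasurableSet E := (hball c r).inter (measurableSet_le hω.1 measurable_const)
  have hintegral : ∫⁻ y in B, E.indicator 1 y ∂μ = μ E := by
    rw [lintegral_indicator_one hE, Measure.restrict_apply hE, inter_eq_left.2 inter_subset_left]
  set v := μ B ^ (η - 1) * μ E
  have hv0 : v ≠ 0 := mul_ne_zero (ENNReal.rpow_pos hB0 hBtop).ne' hE0.ne'
  have hvtop : v ≠ ∞ := ENNReal.mul_ne_top (ENNReal.rpow_ne_top_of_ne_zero hB0.ne' hBtop)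
    (measure_ne_top_of_subset inter_subset_left hBtop)
  have hsub : B ⊆ {x | v / 2 < fracMax d μ η (E.indicator 1) x} :=
    qball_subset_fracMax_superlevel hr (hintegral ▸ ENNReal.half_lt_self hv0 hvtop)
  have hωf : (fun x => ω x * E.indicator 1 x) ≤ B.indicator fun _ => (n : ℝ≥0∞) := by
    intro x
    by_cases hx : x ∈ E
    · simpa [hx, hx.1] using hx.2
    · simp [hx]
  have hweak : v / 2 * luxNorm μ q (B.indicator ω) ≤ C * ((n + 1) * (μ B + 1)) :=
    calc v / 2 * luxNorm μ q (B.indicator ω)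
        ≤ v / 2 * luxNorm μ q ({x | v / 2 < fracMax d μ η (E.indicator 1) x}.indicator ω) :=
          mul_le_mul_right (luxNorm_mono μ q fun x => indicator_le_indicator_of_subset hsub
            (fun _ => zero_le) x) _
      _ ≤ C * luxNorm μ p (fun x => ω x * E.indicator 1 x) :=
          hbound _ (measurable_one.indicator hE) _ (ENNReal.half_pos hv0)
      _ ≤ C * ((n + 1) * (μ B + 1)) := by
          gcongr
          exact (luxNorm_mono μ p hωf).trans
            (luxNorm_indicator_const_le μ p hp.2.1 hp.2.2.1 B n)
  refine (ENNReal.lt_top_of_mul_ne_top_right (ne_top_of_le_ne_top ?_ hweak)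
    (ENNReal.half_pos hv0).ne').ne
  exact ENNReal.mul_ne_top hC (by finiteness)

/-- A weak-type bound for `M_η` forces `‖ωχ_B‖_{q(·)} < ∞` for
every ball `B`. -/
theorem statement14 {X : Type*} [MeasurableSpace X]
    (d : X → X → ℝ) (A0 : ℝ) (μ : Measure X) (Cμ : ℝ≥0∞)
    (hd : IsQuasiMetric d A0)
    (hball : ∀ (c : X) (r : ℝ), MeasurableSet (qball d c r))
    (hdbl : IsDoubling d μ Cμ)
    (η : ℝ) (hη0 : 0 ≤ η) (hη1 : η < 1)
    (p q : X → ℝ≥0∞) (hp : MemP1 μ p) (hq : MemP1 μ q)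
    (hpq : ∀ x, (p x)⁻¹ = (q x)⁻¹ + ENNReal.ofReal η)
    (ω : X → ℝ≥0∞) (hω : IsWeight d μ ω)
    (C : ℝ≥0∞) (hC : C ≠ ∞)
    (hbound : ∀ f : X → ℝ≥0∞, Measurable f → ∀ t : ℝ≥0∞, 0 < t →
      t * luxNorm μ q ({x | t < fracMax d μ η f x}.indicator ω) ≤
        C * luxNorm μ p (fun x => ω x * f x)) :
    ∀ (c : X) (r : ℝ), 0 < r → luxNorm μ q ((qball d c r).indicator ω) ≠ ∞ :=
  statement14_general d μ Cμ hball hdbl η p q hp ω hω C hC hbound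

end
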